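/- arXiv:2004.00177 — 3 statements merged into one kernel-verified Lean document; each statement's English description precedes it below -/
import Mathlib

section
/- If φ is a proper probability distribution function on ℝ and u ∈ ℝ is a constant such that the function f(x,t) = φ(x − u·t) is a mean-field model, then necessarily u = v; that is, the speed of any traveling-wave mean-field model equals v. -/
open MeasureTheory Filter Topology

noncomputable section

/-- A proper probability distribution function on `ℝ`: nondecreasing, right-continuous,
with limit `0` at `-∞` and limit `1` at `+∞`. -/
def IsPDF (F : ℝ → ℝ) : Prop :=
  Monotone F ∧ (∀ x, ContinuousWithinAt F (Set.Ici x) x) ∧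
    Tendsto F atBot (𝓝 0) ∧ Tendsto F atTop (𝓝 1)

/-- The Lebesgue–Stieltjes measure of `F` (zero if `F` is not monotone right-continuous). -/
def lsMeasure (F : ℝ → ℝ) : Measure ℝ := by
  classical
  exact if h : Monotone F ∧ ∀ x, ContinuousWithinAt F (Set.Ici x) x then
    StieltjesFunction.measure ⟨F, h.1, h.2⟩
  else 0

/-- `η̄(y, γ)`: equals `η (γ y)` if `γ` is continuous at `y`, and otherwise the average of
`η` over the interval `[γ(y-), γ(y)]`. -/
def etaBar (η γ : ℝ → ℝ) (y : ℝ) : ℝ := by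
  classical
  exact if ContinuousAt γ y then η (γ y)
  else (γ y - Function.leftLim γ y)⁻¹ * ∫ ν in Function.leftLim γ y..γ y, η ν

/-- A mean-field model for rate `μ`, jump-rate function `η` and jump-size CDF `J`:
(a) for each `t ≥ 0`, `f (·, t)` is a proper probability distribution function;
(b) for each `x`, `f (x, ·)` is nonincreasing and `c`-Lipschitz on `[0,∞)`, `c` independent of `x`;
(c) wherever the partial `t`-derivative exists it equals
`-μ ∫_{(-∞,x]} η̄(y, f(·,t)) (1 - J(x-y)) d_y f(y,t)`. -/
structure IsMFM (μ : ℝ) (η J : ℝ → ℝ) (f : ℝ → ℝ → ℝ) : Prop where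
  pdf : ∀ t : ℝ, 0 ≤ t → IsPDF (fun x => f x t)
  anti : ∀ x : ℝ, AntitoneOn (f x) (Set.Ici 0)
  lip : ∃ c : NNReal, ∀ x : ℝ, LipschitzOnWith c (f x) (Set.Ici 0)
  deriv_eq : ∀ x t : ℝ, 0 ≤ t → ∀ d : ℝ,
    HasDerivWithinAt (f x) d (Set.Ici 0) t →
    d = -μ * ∫ y in Set.Iic x,
      etaBar η (fun z => f z t) y * (1 - J (x - y)) ∂(lsMeasure (fun z => f z t))

/-!
At `t = 0` the model equation says `u φ'(x) = μ R(x)` wherever `φ` is differentiable, where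
`R = crossingRate η J φ`. A wave moving left would make `φ` nonincreasing, so `u ≥ 0`.
By Tonelli, `∫ R dx = (∫ η̄ dφ) · ∫₀^∞ (1 - J) = (∫ η̄ dφ) · m₁`.
If `u > 0`, the uniform Lipschitz bound in time makes `φ` Lipschitz, hence absolutely continuous
with `∫ φ' = 1`, and continuous, so `η̄ = η ∘ φ`; since `φ` pushes `dφ` forward to the uniform
distribution on `(0, 1]`, `∫ η̄ dφ = ∫₀¹ η`, and integrating the equation gives `u = v`.
If `u = 0`, then `R ≡ 0`; as `η̄ > 0` almost everywhere for `dφ`, this forces `m₁ = 0 = v`.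
-/

open Set Function
open scoped ENNReal NNReal

namespace IsPDF

variable {F : ℝ → ℝ}

def stieltjes (hF : IsPDF F) : StieltjesFunction ℝ := ⟨F, hF.1, hF.2.1⟩

theorem lsMeasure_eq (hF : IsPDF F) : lsMeasure F = hF.stieltjes.measure := by
  rw [lsMeasure, dif_pos ⟨hF.1, hF.2.1⟩]
  rfl

theorem nonneg (hF : IsPDF F) (x : ℝ) : 0 ≤ F x :=
  le_of_tendsto hF.2.2.1 (eventually_atBot.2 ⟨x, fun _ hy => hF.1 hy⟩)

theorem le_one (hF : IsPDF F) (x : ℝ) : F x ≤ 1 :=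
  ge_of_tendsto hF.2.2.2 (eventually_atTop.2 ⟨x, fun _ hy => hF.1 hy⟩)

theorem isProbabilityMeasure (hF : IsPDF F) : IsProbabilityMeasure (lsMeasure F) := by
  rw [hF.lsMeasure_eq]
  exact hF.stieltjes.isProbabilityMeasure hF.2.2.1 hF.2.2.2

theorem lsMeasure_Iic (hF : IsPDF F) (x : ℝ) : lsMeasure F (Iic x) = .ofReal (F x) := by
  rw [hF.lsMeasure_eq, hF.stieltjes.measure_Iic hF.2.2.1, sub_zero]
  rfl

theorem lsMeasure_Ioi (hF : IsPDF F) (x : ℝ) : lsMeasure F (Ioi x) = .ofReal (1 - F x) := by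
  rw [hF.lsMeasure_eq, hF.stieltjes.measure_Ioi hF.2.2.2]
  rfl

theorem lsMeasure_Iio (hF : IsPDF F) (x : ℝ) :
    lsMeasure F (Iio x) = .ofReal (leftLim F x) := by
  rw [hF.lsMeasure_eq, hF.stieltjes.measure_Iio hF.2.2.1, sub_zero]
  rfl

theorem lsMeasure_Ici (hF : IsPDF F) (x : ℝ) :
    lsMeasure F (Ici x) = .ofReal (1 - leftLim F x) := by
  rw [hF.lsMeasure_eq, hF.stieltjes.measure_Ici hF.2.2.2]
  rfl

theorem leftLim_nonneg (hF : IsPDF F) (x : ℝ) : 0 ≤ leftLim F x :=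
  (hF.nonneg (x - 1)).trans (hF.1.le_leftLim (by linarith))

theorem leftLim_lt_of_not_continuousAt (hF : IsPDF F) {x : ℝ} (hx : ¬ ContinuousAt F x) :
    leftLim F x < F x := by
  refine (hF.1.leftLim_le le_rfl).lt_of_ne fun h => hx ?_
  rw [hF.1.continuousAt_iff_leftLim_eq_rightLim, h, (hF.2.1 x).rightLim_eq]

theorem ae_nonneg_of_forall_neg_eq_zero (hF : IsPDF F) (hFneg : ∀ y < 0, F y = 0) :
    ∀ᵐ y ∂lsMeasure F, 0 ≤ y := by
  have hlim : leftLim F 0 = 0 :=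
    leftLim_eq_of_tendsto (tendsto_const_nhds.congr' (eventually_nhdsWithin_of_forall
      fun y hy => (hFneg y hy).symm))
  simp only [ae_iff, not_le, Iio_def, hF.lsMeasure_Iio, hlim, ENNReal.ofReal_zero]

theorem ofReal_integral_id_eq_lintegral_one_sub (hF : IsPDF F) (hFneg : ∀ y < 0, F y = 0)
    (hint : Integrable (fun y : ℝ => y) (lsMeasure F)) :
    .ofReal (∫ y, y ∂lsMeasure F) = ∫⁻ s in Ioi 0, .ofReal (1 - F s) := by
  rw [ofReal_integral_eq_lintegral_ofReal hint (hF.ae_nonneg_of_forall_neg_eq_zero hFneg),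
    lintegral_eq_lintegral_meas_lt _ (hF.ae_nonneg_of_forall_neg_eq_zero hFneg) aemeasurable_id]
  exact setLIntegral_congr_fun measurableSet_Ioi fun s _ => hF.lsMeasure_Ioi s

end IsPDF

theorem average_mem_Icc {g : ℝ → ℝ} {a b m M : ℝ} (hab : a < b) (hg : ContinuousOn g (Icc a b))
    (hgm : MapsTo g (Icc a b) (Icc m M)) : (b - a)⁻¹ * ∫ x in a..b, g x ∈ Icc m M := by
  rw [← smul_eq_mul, ← interval_average_eq]
  refine (convex_Icc m M).set_average_mem isClosed_Icc ?_ ?_ ?_ ?_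
  · simp [uIoc_of_le hab.le, hab]
  · simp [uIoc_of_le hab.le]
  · exact ae_restrict_of_forall_mem measurableSet_uIoc fun x hx =>
      hgm (Ioc_subset_Icc_self (uIoc_of_le hab.le ▸ hx))
  · rw [uIoc_of_le hab.le]
    exact (hg.integrableOn_Icc).mono_set Ioc_subset_Icc_self

theorem measure_setOf_measure_Ici_eq_zero (ν : Measure ℝ) : ν {y | ν (Ici y) = 0} = 0 := by
  refine measure_null_of_locally_null _ fun x hx => ?_
  by_cases h : ∃ z, ν (Ici z) = 0 ∧ z < x
  · obtain ⟨z, hz, hzx⟩ := h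
    exact ⟨Ioi z, mem_nhdsWithin_of_mem_nhds (Ioi_mem_nhds hzx),
      measure_mono_null Ioi_subset_Ici_self hz⟩
  · push Not at h
    exact ⟨_, self_mem_nhdsWithin, measure_mono_null (fun y hy => h y hy) hx⟩

section etaBar

variable {η φ : ℝ → ℝ}

theorem etaBar_of_continuousAt {y : ℝ} (hy : ContinuousAt φ y) : etaBar η φ y = η (φ y) := by
  simp [etaBar, hy]

theorem etaBar_of_not_continuousAt {y : ℝ} (hy : ¬ ContinuousAt φ y) :
    etaBar η φ y = (φ y - leftLim φ y)⁻¹ * ∫ ν in leftLim φ y..φ y, η ν := by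
  simp [etaBar, hy]

theorem etaBar_eq_comp_of_continuous (hφ : Continuous φ) : etaBar η φ = η ∘ φ :=
  funext fun _ => etaBar_of_continuousAt hφ.continuousAt

theorem etaBar_mem_Icc (hηc : ContinuousOn η (Icc 0 1)) (hη : MapsTo η (Icc 0 1) (Icc 0 1))
    (hφ : IsPDF φ) (y : ℝ) : etaBar η φ y ∈ Icc 0 1 := by
  by_cases hy : ContinuousAt φ y
  · rw [etaBar_of_continuousAt hy]
    exact hη ⟨hφ.nonneg y, hφ.le_one y⟩
  · rw [etaBar_of_not_continuousAt hy]
    have hsub : Icc (leftLim φ y) (φ y) ⊆ Icc 0 1 :=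
      Icc_subset_Icc (hφ.leftLim_nonneg y) (hφ.le_one y)
    exact average_mem_Icc (hφ.leftLim_lt_of_not_continuousAt hy) (hηc.mono hsub) (hη.mono_left hsub)

theorem etaBar_pos_of_leftLim_lt_one (hηc : ContinuousOn η (Icc 0 1))
    (hηpos : ∀ x ∈ Ico 0 1, 0 < η x) (hφ : IsPDF φ) {y : ℝ} (hy : leftLim φ y < 1) :
    0 < etaBar η φ y := by
  by_cases hc : ContinuousAt φ y
  · rw [etaBar_of_continuousAt hc]
    rw [hc.continuousWithinAt.leftLim_eq] at hy
    exact hηpos _ ⟨hφ.nonneg y, hy⟩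
  · rw [etaBar_of_not_continuousAt hc]
    have hlt := hφ.leftLim_lt_of_not_continuousAt hc
    refine mul_pos (inv_pos.2 (sub_pos.2 hlt))
      (intervalIntegral.intervalIntegral_pos_of_pos_on ?_ ?_ hlt)
    · refine (hηc.mono ?_).intervalIntegrable
      rw [uIcc_of_le hlt.le]
      exact Icc_subset_Icc (hφ.leftLim_nonneg y) (hφ.le_one y)
    · exact fun x hx => hηpos x ⟨(hφ.leftLim_nonneg y).trans hx.1.le, hx.2.trans_le (hφ.le_one y)⟩

theorem measurable_etaBar (hηc : ContinuousOn η (Icc 0 1)) (hφ : IsPDF φ) :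
    Measurable (etaBar η φ) := by
  refine ContinuousOn.measurable_of_countable_compl (s := {y | ContinuousAt φ y}) ?_
    hφ.1.countable_not_continuousAt
  refine ContinuousOn.congr (f := η ∘ φ) (fun y hy => ?_) fun y hy => etaBar_of_continuousAt hy
  exact (hηc.continuousWithinAt ⟨hφ.nonneg y, hφ.le_one y⟩).comp hy.continuousWithinAt
    fun z _ => ⟨hφ.nonneg z, hφ.le_one z⟩

theorem ae_etaBar_pos (hηc : ContinuousOn η (Icc 0 1)) (hηpos : ∀ x ∈ Ico 0 1, 0 < η x)
    (hφ : IsPDF φ) : ∀ᵐ y ∂lsMeasure φ, 0 < etaBar η φ y := by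
  refine measure_mono_null (fun y hy => ?_) (measure_setOf_measure_Ici_eq_zero (lsMeasure φ))
  rw [mem_ofPred_eq, hφ.lsMeasure_Ici, ENNReal.ofReal_eq_zero, sub_nonpos]
  by_contra h
  exact hy (etaBar_pos_of_leftLim_lt_one hηc hηpos hφ (not_le.1 h))

theorem lintegral_etaBar_ne_zero (hηc : ContinuousOn η (Icc 0 1))
    (hηpos : ∀ x ∈ Ico 0 1, 0 < η x) (hφ : IsPDF φ) :
    ∫⁻ y, .ofReal (etaBar η φ y) ∂lsMeasure φ ≠ 0 := by
  have := hφ.isProbabilityMeasure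
  intro h
  obtain ⟨y, hzero, hpos⟩ :=
    (((lintegral_eq_zero_iff (measurable_etaBar hηc hφ).ennreal_ofReal).1 h).and
      (ae_etaBar_pos hηc hηpos hφ)).exists
  exact hpos.not_ge (ENNReal.ofReal_eq_zero.1 hzero)

end etaBar

theorem lintegral_setLIntegral_Iic_mul_sub (ν : Measure ℝ) [SFinite ν] {h g : ℝ → ℝ≥0∞}
    (hh : Measurable h) (hg : Measurable g) :
    ∫⁻ x, ∫⁻ y in Iic x, h y * g (x - y) ∂ν = (∫⁻ y, h y ∂ν) * ∫⁻ s in Ioi 0, g s := by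
  have hG : Measurable ((Ici 0).indicator g) := hg.indicator measurableSet_Ici
  calc ∫⁻ x, ∫⁻ y in Iic x, h y * g (x - y) ∂ν
      = ∫⁻ x, ∫⁻ y, h y * (Ici 0).indicator g (x - y) ∂ν := by
        refine lintegral_congr fun x => ?_
        rw [← lintegral_indicator measurableSet_Iic]
        refine lintegral_congr fun y => ?_
        by_cases hy : y ≤ x
        · simp [hy]
        · simp [hy, (sub_neg.2 (not_le.1 hy)).not_ge]
    _ = ∫⁻ y, (∫⁻ x, h y * (Ici 0).indicator g (x - y)) ∂ν :=
        lintegral_lintegral_swap ((hh.comp measurable_snd).mul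
          (hG.comp (measurable_fst.sub measurable_snd))).aemeasurable
    _ = ∫⁻ y, h y * (∫⁻ s in Ioi 0, g s) ∂ν := by
        refine lintegral_congr fun y => ?_
        rw [lintegral_const_mul (h y) (f := fun x => (Ici 0).indicator g (x - y))
            (hG.comp (measurable_sub_const y)),
          lintegral_sub_right_eq_self (fun x => (Ici 0).indicator g x) y,
          lintegral_indicator measurableSet_Ici, Measure.restrict_congr_set Ioi_ae_eq_Ici]
    _ = (∫⁻ y, h y ∂ν) * ∫⁻ s in Ioi 0, g s := lintegral_mul_const _ hh

/-- The integral in condition (c) of `IsMFM`: there `∂f/∂t = -μ * crossingRate η J (f · t) x`. -/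
def crossingRate (η J γ : ℝ → ℝ) (x : ℝ) : ℝ :=
  ∫ y in Iic x, etaBar η γ y * (1 - J (x - y)) ∂lsMeasure γ

section crossingRate

variable {η J φ : ℝ → ℝ}

theorem ofReal_crossingRate (hηc : ContinuousOn η (Icc 0 1)) (hη : MapsTo η (Icc 0 1) (Icc 0 1))
    (hJ : IsPDF J) (hφ : IsPDF φ) (x : ℝ) :
    .ofReal (crossingRate η J φ x) =
      ∫⁻ y in Iic x, .ofReal (etaBar η φ y) * .ofReal (1 - J (x - y)) ∂lsMeasure φ := by
  have := hφ.isProbabilityMeasure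
  have hmem (y : ℝ) : etaBar η φ y * (1 - J (x - y)) ∈ Icc 0 1 := by
    obtain ⟨h0, h1⟩ := etaBar_mem_Icc hηc hη hφ y
    have := hJ.nonneg (x - y)
    have := hJ.le_one (x - y)
    constructor <;> nlinarith
  have hmeas : Measurable fun y => etaBar η φ y * (1 - J (x - y)) :=
    (measurable_etaBar hηc hφ).mul
      (measurable_const.sub (hJ.1.measurable.comp (measurable_const_sub x)))
  have hint : Integrable (fun y => etaBar η φ y * (1 - J (x - y)))
      ((lsMeasure φ).restrict (Iic x)) :=
    .of_bound hmeas.aestronglyMeasurable 1 (.of_forall fun y => by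
      rw [Real.norm_of_nonneg (hmem y).1]; exact (hmem y).2)
  rw [crossingRate, ofReal_integral_eq_lintegral_ofReal hint (.of_forall fun y => (hmem y).1)]
  exact lintegral_congr fun y => ENNReal.ofReal_mul (etaBar_mem_Icc hηc hη hφ y).1

theorem lintegral_ofReal_crossingRate (hηc : ContinuousOn η (Icc 0 1))
    (hη : MapsTo η (Icc 0 1) (Icc 0 1)) (hJ : IsPDF J) (hφ : IsPDF φ) :
    ∫⁻ x, .ofReal (crossingRate η J φ x) =
      (∫⁻ y, .ofReal (etaBar η φ y) ∂lsMeasure φ) * ∫⁻ s in Ioi 0, .ofReal (1 - J s) := by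
  have := hφ.isProbabilityMeasure
  simp_rw [ofReal_crossingRate hηc hη hJ hφ]
  exact lintegral_setLIntegral_Iic_mul_sub _ (measurable_etaBar hηc hφ).ennreal_ofReal
    (measurable_const.sub hJ.1.measurable).ennreal_ofReal

end crossingRate

theorem StieltjesFunction.measure_le_smul_volume (f : StieltjesFunction ℝ) {K : ℝ≥0}
    (hf : LipschitzWith K f) : f.measure ≤ K • volume := by
  have hmono : Monotone fun x => K * x - f x := fun x y hxy => by
    have h := hf.dist_le_mul y x
    rw [Real.dist_eq, Real.dist_eq, abs_of_nonneg (sub_nonneg.2 hxy)] at h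
    linarith [le_abs_self (f y - f x)]
  let g : StieltjesFunction ℝ := ⟨fun x => K * x - f x, hmono,
    fun x => ((continuous_const.mul continuous_id).sub hf.continuous).continuousWithinAt⟩
  have hsum : f + g = K • StieltjesFunction.id := by
    ext x
    change f x + (K * x - f x) = K * x
    ring
  calc f.measure ≤ f.measure + g.measure := Measure.le_add_right le_rfl
    _ = K • volume := by
      rw [← StieltjesFunction.measure_add, hsum, StieltjesFunction.measure_smul,
        Real.volume_eq_stieltjes_id]

theorem IsPDF.lintegral_ofReal_deriv_eq_one {φ : ℝ → ℝ} (hφ : IsPDF φ) {K : ℝ≥0}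
    (hL : LipschitzWith K φ) : ∫⁻ x, .ofReal (deriv φ x) = 1 := by
  have := hφ.isProbabilityMeasure
  rw [hφ.lsMeasure_eq] at this
  have hac : hφ.stieltjes.measure ≪ volume :=
    Measure.absolutelyContinuous_of_le_smul (hφ.stieltjes.measure_le_smul_volume hL)
  calc ∫⁻ x, .ofReal (deriv φ x) = ∫⁻ x, hφ.stieltjes.measure.rnDeriv volume x := by
        refine lintegral_congr_ae ?_
        filter_upwards [hφ.stieltjes.ae_hasDerivAt, hφ.stieltjes.measure.rnDeriv_lt_top volume]
          with x hd hfin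
        rw [← ENNReal.ofReal_toReal hfin.ne]
        exact congrArg _ hd.deriv
    _ = 1 := by rw [Measure.lintegral_rnDeriv hac, measure_univ]

theorem Monotone.exists_preimage_Iic_eq_Iic {φ : ℝ → ℝ} (hmono : Monotone φ) (hc : Continuous φ)
    {c : ℝ} (hne : (φ ⁻¹' Iic c).Nonempty) (hbdd : BddAbove (φ ⁻¹' Iic c)) :
    ∃ x, φ ⁻¹' Iic c = Iic x ∧ φ x = c := by
  have hx : sSup (φ ⁻¹' Iic c) ∈ φ ⁻¹' Iic c :=
    (isClosed_Iic.preimage hc).csSup_mem hne hbdd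
  refine ⟨_, Subset.antisymm (fun y hy => le_csSup hbdd hy) fun y hy => (hmono hy).trans hx,
    le_antisymm hx (not_lt.1 fun hlt => ?_)⟩
  obtain ⟨y, hy, hxy⟩ := (((hc.tendsto _).mono_left nhdsWithin_le_nhds).eventually
    (gt_mem_nhds hlt) |>.and (self_mem_nhdsWithin (s := Ioi (sSup (φ ⁻¹' Iic c))))).exists
  exact (le_csSup hbdd (mem_preimage.2 hy.le)).not_gt hxy

theorem IsPDF.map_lsMeasure {φ : ℝ → ℝ} (hφ : IsPDF φ) (hc : Continuous φ) :
    (lsMeasure φ).map φ = volume.restrict (Ioc 0 1) := by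
  have := hφ.isProbabilityMeasure
  refine Measure.ext_of_Iic _ _ fun c => ?_
  rw [Measure.map_apply hc.measurable measurableSet_Iic, Measure.restrict_apply measurableSet_Iic,
    inter_comm, Ioc_inter_Iic, Real.volume_Ioc, sub_zero]
  rcases (φ ⁻¹' Iic c).eq_empty_or_nonempty with hemp | hne
  · have hc0 : c ≤ 0 := not_lt.1 fun hpos => by
      obtain ⟨y, hy⟩ := (hφ.2.2.1.eventually (gt_mem_nhds hpos)).exists
      exact hemp.subset (mem_preimage.2 (mem_Iic.2 hy.le))
    rw [hemp, measure_empty, ENNReal.ofReal_of_nonpos (inf_le_right.trans hc0)]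
  rcases le_or_gt 1 c with hc1 | hc1
  · rw [eq_univ_of_forall fun y => mem_preimage.2 ((hφ.le_one y).trans hc1), measure_univ,
      inf_eq_left.2 hc1, ENNReal.ofReal_one]
  have hbdd : BddAbove (φ ⁻¹' Iic c) := by
    obtain ⟨z, hz⟩ := (hφ.2.2.2.eventually (lt_mem_nhds hc1)).exists_forall_of_atTop
    exact ⟨z, fun y hy => not_lt.1 fun hzy => (hz y hzy.le).not_ge hy⟩
  obtain ⟨x, hS, hx⟩ := hφ.1.exists_preimage_Iic_eq_Iic hc hne hbdd
  rw [hS, hφ.lsMeasure_Iic, hx, inf_eq_right.2 hc1.le]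

theorem IsPDF.lintegral_comp_eq_intervalIntegral {φ η : ℝ → ℝ} (hφ : IsPDF φ) (hc : Continuous φ)
    (hηc : ContinuousOn η (Icc 0 1)) (hη0 : ∀ x ∈ Icc (0 : ℝ) 1, 0 ≤ η x) :
    ∫⁻ y, .ofReal (η (φ y)) ∂lsMeasure φ = .ofReal (∫ s in 0..1, η s) := by
  have hηc' : ContinuousOn η (Ioc 0 1) := hηc.mono Ioc_subset_Icc_self
  have hae : AEMeasurable (fun s => ENNReal.ofReal (η s)) ((lsMeasure φ).map φ) := by
    rw [hφ.map_lsMeasure hc]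
    exact (hηc'.aemeasurable measurableSet_Ioc).ennreal_ofReal
  rw [← lintegral_map' hae hc.aemeasurable, hφ.map_lsMeasure hc,
    intervalIntegral.integral_of_le zero_le_one,
    ofReal_integral_eq_lintegral_ofReal (hηc.integrableOn_Icc.mono_set Ioc_subset_Icc_self)
      (ae_restrict_of_forall_mem measurableSet_Ioc fun x hx => hη0 x (Ioc_subset_Icc_self hx))]

namespace IsMFM

variable {μ u : ℝ} {η J φ : ℝ → ℝ}

theorem speed_nonneg (hmfm : IsMFM μ η J fun x t => φ (x - u * t)) (hφ : IsPDF φ) : 0 ≤ u := by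
  by_contra! hu
  obtain ⟨a, ha⟩ := (hφ.2.2.1.eventually (gt_mem_nhds one_half_pos)).exists
  obtain ⟨b, hb, hab⟩ := ((hφ.2.2.2.eventually (lt_mem_nhds one_half_lt_one)).and
    (eventually_ge_atTop a)).exists
  have ht : 0 ≤ (a - b) / u := div_nonneg_of_nonpos (sub_nonpos.2 hab) hu.le
  have h : φ (a - u * ((a - b) / u)) ≤ φ (a - u * 0) :=
    hmfm.anti a (mem_Ici.2 le_rfl) (mem_Ici.2 ht) ht
  rw [mul_div_cancel₀ _ hu.ne, sub_sub_cancel, mul_zero, sub_zero] at h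
  linarith

theorem speed_mul_deriv (hmfm : IsMFM μ η J fun x t => φ (x - u * t)) {x d : ℝ}
    (hd : HasDerivAt φ d x) : u * d = μ * crossingRate η J φ x := by
  have hlin : HasDerivAt (fun t => x - u * t) (-u) 0 := by
    simpa using ((hasDerivAt_id (0 : ℝ)).const_mul u).const_sub x
  have hcomp : HasDerivAt (fun t => φ (x - u * t)) (d * -u) 0 :=
    (by simpa using hd : HasDerivAt φ d (x - u * 0)).comp 0 hlin
  have h := hmfm.deriv_eq x 0 le_rfl _ hcomp.hasDerivWithinAt
  simp only [mul_zero, sub_zero] at h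
  rw [crossingRate]
  linear_combination -h

theorem ofReal_speed_mul_lintegral_deriv_eq (hmfm : IsMFM μ η J fun x t => φ (x - u * t))
    (hφ : IsPDF φ) (hμ : 0 ≤ μ) :
    .ofReal u * ∫⁻ x, .ofReal (deriv φ x) = .ofReal μ * ∫⁻ x, .ofReal (crossingRate η J φ x) := by
  rw [← lintegral_const_mul' _ _ ENNReal.ofReal_ne_top,
    ← lintegral_const_mul' _ _ ENNReal.ofReal_ne_top]
  refine lintegral_congr_ae ?_
  filter_upwards [hφ.1.ae_differentiableAt] with x hx
  rw [← ENNReal.ofReal_mul (hmfm.speed_nonneg hφ), ← ENNReal.ofReal_mul hμ,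
    hmfm.speed_mul_deriv hx.hasDerivAt]

theorem exists_lipschitzWith (hmfm : IsMFM μ η J fun x t => φ (x - u * t)) (hu : 0 < u) :
    ∃ K, LipschitzWith K φ := by
  obtain ⟨c, hc⟩ := hmfm.lip
  refine ⟨c / u.toNNReal, LipschitzWith.of_dist_le_mul fun a b => ?_⟩
  have ht (y : ℝ) (hy : y ≤ max a b) : (max a b - y) / u ∈ Ici 0 :=
    div_nonneg (sub_nonneg.2 hy) hu.le
  have h := (hc (max a b)).dist_le_mul _ (ht a (le_max_left a b)) _ (ht b (le_max_right a b))
  simp only [mul_div_cancel₀ _ hu.ne', sub_sub_cancel] at h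
  calc dist (φ a) (φ b) ≤ c * dist ((max a b - a) / u) ((max a b - b) / u) := h
    _ = ↑(c / u.toNNReal) * dist a b := by
      rw [Real.dist_eq, Real.dist_eq, NNReal.coe_div, Real.coe_toNNReal _ hu.le, ← sub_div,
        abs_div, abs_of_pos hu, sub_sub_sub_cancel_left, abs_sub_comm]
      ring

end IsMFM

/-- If `φ` is a proper probability distribution function and
`f(x,t) = φ(x − u·t)` is a mean-field model, then necessarily `u = v`. -/
theorem traveling_wave_speed_eq_v
    (η : ℝ → ℝ) (hη_cont : ContinuousOn η (Set.Icc 0 1))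
    (hη_anti : StrictAntiOn η (Set.Icc 0 1)) (hη0 : η 0 = 1) (hη1 : η 1 = 0)
    (J : ℝ → ℝ) (hJ : IsPDF J) (hJneg : ∀ y : ℝ, y < 0 → J y = 0)
    (hm1 : Integrable (fun y : ℝ => y) (lsMeasure J))
    (μ v : ℝ) (hμ : 0 < μ)
    (hv : v = μ * (∫ y, y ∂(lsMeasure J)) * ∫ ν in (0:ℝ)..1, η ν)
    (φ : ℝ → ℝ) (hφ : IsPDF φ) (u : ℝ)
    (hmfm : IsMFM μ η J (fun x t => φ (x - u * t))) :
    u = v := by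
  have hmaps : MapsTo η (Icc 0 1) (Icc 0 1) := by
    simpa only [hη0, hη1] using hη_anti.antitoneOn.mapsTo_Icc
  have hpos : ∀ x ∈ Ico (0 : ℝ) 1, 0 < η x := fun x hx =>
    hη1 ▸ hη_anti ⟨hx.1, hx.2.le⟩ (right_mem_Icc.2 zero_le_one) hx.2
  have hm1_nonneg : 0 ≤ ∫ y, y ∂lsMeasure J :=
    integral_nonneg_of_ae (hJ.ae_nonneg_of_forall_neg_eq_zero hJneg)
  have key := hmfm.ofReal_speed_mul_lintegral_deriv_eq hφ hμ.le
  rw [lintegral_ofReal_crossingRate hη_cont hmaps hJ hφ,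
    ← hJ.ofReal_integral_id_eq_lintegral_one_sub hJneg hm1] at key
  rcases (hmfm.speed_nonneg hφ).eq_or_lt with rfl | hu
  · have hm1_zero : ∫ y, y ∂lsMeasure J = 0 := by
      simp only [ENNReal.ofReal_zero, zero_mul, eq_comm (a := (0 : ℝ≥0∞)), mul_eq_zero,
        ENNReal.ofReal_eq_zero, not_le.2 hμ, lintegral_etaBar_ne_zero hη_cont hpos hφ,
        false_or] at key
      exact le_antisymm key hm1_nonneg
    rw [hv, hm1_zero]
    ring
  · obtain ⟨K, hK⟩ := hmfm.exists_lipschitzWith hu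
    have hη_int_nonneg : 0 ≤ ∫ s in (0 : ℝ)..1, η s :=
      intervalIntegral.integral_nonneg zero_le_one fun x hx => (hmaps hx).1
    rw [hφ.lintegral_ofReal_deriv_eq_one hK, mul_one, etaBar_eq_comp_of_continuous hK.continuous,
      Function.comp_def, hφ.lintegral_comp_eq_intervalIntegral hK.continuous hη_cont
        fun x hx => (hmaps hx).1, ← ENNReal.ofReal_mul hη_int_nonneg,
      ← ENNReal.ofReal_mul hμ.le] at key
    rw [hv, (ENNReal.ofReal_eq_ofReal_iff hu.le (by positivity)).1 key]
    ring
end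
end

section
/- Let K ≥ 1 be an integer, η(ν) = (1−ν)^K, J(y) = 1 − e^{−y} for y ≥ 0, and μ = 1, so that v = 1/(K+1). Then for any c ∈ ℝ, the function φ(x) = 1 − (1 + e^{K(x−c)})^{−1/K} is a traveling wave shape: φ is a Lipschitz continuous proper probability distribution function on ℝ, continuously differentiable, and v φ′(x) = ∫_{−∞}^x φ′(y) (1 − φ(y))^K e^{−(x−y)} dy holds for every x ∈ ℝ. -/
/-!
Write `E = exp (K (x - c))`. Then `φ' = E (1 + E)^(-1/K - 1)` lies in `[0, 1]` and
`(1 - φ)^K = (1 + E)⁻¹`. Multiplied by `exp x`, the integral equation says that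
`exp y φ'(y) / (K + 1)` is the primitive of `exp y φ'(y) (1 - φ(y))^K` vanishing at `-∞`; this is
the identity `(exp y φ'(y))' = (K + 1) exp y φ'(y) / (1 + E)`, which holds because
`(-1/K - 1) K = -(K + 1)`.
-/

open MeasureTheory Filter Topology

noncomputable section

open Real Set

def expWave (κ c x : ℝ) : ℝ := 1 - (1 + exp (κ * (x - c))) ^ (-(1 : ℝ) / κ)

def expWaveDeriv (κ c x : ℝ) : ℝ :=
  exp (κ * (x - c)) * (1 + exp (κ * (x - c))) ^ (-(1 : ℝ) / κ - 1)

section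

variable {κ c : ℝ}

lemma one_le_one_add_exp (t : ℝ) : 1 ≤ 1 + exp t := by linarith [exp_pos t]

lemma hasDerivAt_exp_mul_sub (κ c x : ℝ) :
    HasDerivAt (fun x => exp (κ * (x - c))) (κ * exp (κ * (x - c))) x := by
  simpa [mul_comm] using (((hasDerivAt_id x).sub_const c).const_mul κ).exp

theorem hasDerivAt_expWave (hκ : κ ≠ 0) (x : ℝ) :
    HasDerivAt (expWave κ c) (expWaveDeriv κ c x) x := by
  have hg := ((hasDerivAt_exp_mul_sub κ c x).const_add 1).rpow_const (p := -(1 : ℝ) / κ)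
    (Or.inl (by positivity))
  refine (hg.const_sub 1).congr_deriv ?_
  unfold expWaveDeriv
  field_simp

theorem expWaveDeriv_nonneg (κ c x : ℝ) : 0 ≤ expWaveDeriv κ c x := by
  unfold expWaveDeriv; positivity

theorem expWaveDeriv_le_one (hκ : 0 < κ) (x : ℝ) : expWaveDeriv κ c x ≤ 1 := by
  set E := exp (κ * (x - c))
  have hg : 1 ≤ 1 + E := one_le_one_add_exp _
  have hpow : (1 + E) ^ (-(1 : ℝ) / κ) ≤ 1 :=
    rpow_le_one_of_one_le_of_nonpos hg (div_nonpos_of_nonpos_of_nonneg (by norm_num) hκ.le)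
  rw [expWaveDeriv, rpow_sub_one (by positivity), mul_div_assoc', div_le_one (by positivity)]
  calc E * (1 + E) ^ (-(1 : ℝ) / κ) ≤ (1 + E) * 1 := by gcongr; linarith
    _ = 1 + E := mul_one _

theorem continuous_expWaveDeriv : Continuous (expWaveDeriv κ c) := by
  unfold expWaveDeriv
  exact (by fun_prop : Continuous fun x => exp (κ * (x - c))).mul
    ((by fun_prop : Continuous fun x => 1 + exp (κ * (x - c))).rpow_const
      fun x => Or.inl (by positivity))

theorem lipschitzWith_one_expWave (hκ : 0 < κ) : LipschitzWith 1 (expWave κ c) := by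
  refine lipschitzWith_of_nnnorm_deriv_le
    (fun x => (hasDerivAt_expWave hκ.ne' x).differentiableAt) fun x => ?_
  rw [← NNReal.coe_le_coe, coe_nnnorm, (hasDerivAt_expWave hκ.ne' x).deriv, NNReal.coe_one,
    norm_of_nonneg (expWaveDeriv_nonneg κ c x)]
  exact expWaveDeriv_le_one hκ x

theorem monotone_expWave (hκ : κ ≠ 0) : Monotone (expWave κ c) :=
  monotone_of_deriv_nonneg (fun x => (hasDerivAt_expWave hκ x).differentiableAt) fun x =>
    (hasDerivAt_expWave hκ x).deriv ▸ expWaveDeriv_nonneg κ c x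

theorem tendsto_expWave_atBot (hκ : 0 < κ) : Tendsto (expWave κ c) atBot (𝓝 0) := by
  have hE : Tendsto (fun x => exp (κ * (x - c))) atBot (𝓝 0) :=
    tendsto_exp_atBot.comp <| (tendsto_atBot_add_const_right _ (-c) tendsto_id).const_mul_atBot hκ
  have hpow := (continuousAt_rpow_const 1 (-(1 : ℝ) / κ) (Or.inl one_ne_zero)).tendsto.comp
    (by simpa using hE.const_add 1)
  unfold expWave
  simpa using hpow.const_sub 1

theorem tendsto_expWave_atTop (hκ : 0 < κ) : Tendsto (expWave κ c) atTop (𝓝 1) := by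
  have hE : Tendsto (fun x => 1 + exp (κ * (x - c))) atTop atTop :=
    tendsto_atTop_add_const_left _ 1 <| tendsto_exp_atTop.comp <|
      (tendsto_atTop_add_const_right _ (-c) tendsto_id).const_mul_atTop hκ
  have hpow := (tendsto_rpow_neg_atTop (one_div_pos.2 hκ)).comp hE
  unfold expWave
  simpa [neg_div] using hpow.const_sub 1

theorem hasDerivAt_exp_mul_expWaveDeriv (hκ : κ ≠ 0) (y : ℝ) :
    HasDerivAt (fun y => exp y * expWaveDeriv κ c y)
      ((κ + 1) * (exp y * expWaveDeriv κ c y / (1 + exp (κ * (y - c))))) y := by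
  have hg : 0 < 1 + exp (κ * (y - c)) := by positivity
  have hpow := ((hasDerivAt_exp_mul_sub κ c y).const_add 1).rpow_const (p := -(1 : ℝ) / κ - 1)
    (Or.inl hg.ne')
  refine ((hasDerivAt_exp y).mul ((hasDerivAt_exp_mul_sub κ c y).mul hpow)).congr_deriv ?_
  rw [rpow_sub_one hg.ne' (-(1 : ℝ) / κ - 1)]
  simp only [expWaveDeriv, Pi.mul_apply]
  field_simp
  ring

theorem integral_Iic_exp_mul_expWaveDeriv_div (hκ : 0 < κ) (x : ℝ) :
    ∫ y in Iic x, exp y * expWaveDeriv κ c y / (1 + exp (κ * (y - c))) =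
      exp x * expWaveDeriv κ c x / (κ + 1) := by
  have hint : IntegrableOn (fun y => exp y * expWaveDeriv κ c y / (1 + exp (κ * (y - c))))
      (Iic x) := by
    have hcont : Continuous fun y => exp y * expWaveDeriv κ c y / (1 + exp (κ * (y - c))) :=
      (continuous_exp.mul continuous_expWaveDeriv).div (by fun_prop) fun y => by positivity
    refine (integrableOn_exp_Iic x).mono' hcont.aestronglyMeasurable (ae_of_all _ fun y => ?_)
    have hD0 := expWaveDeriv_nonneg κ c y
    have hDg := (expWaveDeriv_le_one (c := c) hκ y).trans (one_le_one_add_exp (κ * (y - c)))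
    rw [norm_of_nonneg (by positivity), div_le_iff₀ (by positivity)]
    exact mul_le_mul_of_nonneg_left hDg (exp_pos y).le
  have hlim : Tendsto (fun y => exp y * expWaveDeriv κ c y) atBot (𝓝 0) := by
    refine squeeze_zero (fun y => by have := expWaveDeriv_nonneg κ c y; positivity)
      (fun y => mul_le_of_le_one_right (exp_pos y).le (expWaveDeriv_le_one hκ y))
      tendsto_exp_atBot
  have hFTC := integral_Iic_of_hasDerivAt_of_tendsto'
    (fun y _ => hasDerivAt_exp_mul_expWaveDeriv (c := c) hκ.ne' y) (hint.const_mul (κ + 1)) hlim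
  rw [integral_const_mul, sub_zero] at hFTC
  rw [eq_div_iff (by positivity), mul_comm, hFTC]

theorem one_sub_expWave_pow {K : ℕ} (hK : K ≠ 0) (c y : ℝ) :
    (1 - expWave K c y) ^ K = (1 + exp (K * (y - c)))⁻¹ := by
  rw [expWave, sub_sub_cancel, ← rpow_natCast, ← rpow_mul (by positivity),
    div_mul_cancel₀ _ (Nat.cast_ne_zero.2 hK), rpow_neg_one]

end

/-- for `η(ν) = (1−ν)^K`, exponential jump sizes `J(y) = 1 − e^{−y}`, `μ = 1`
and `v = 1/(K+1)`, the explicit function `φ(x) = 1 − (1 + e^{K(x−c)})^{−1/K}` is a traveling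
wave shape: it is a Lipschitz continuous proper probability distribution function,
continuously differentiable, and satisfies
`v φ′(x) = ∫_{−∞}^x φ′(y) (1 − φ(y))^K e^{−(x−y)} dy` for every `x`. -/
theorem explicit_traveling_wave_exponential
    (K : ℕ) (hK : 1 ≤ K) (c : ℝ) (φ : ℝ → ℝ)
    (hφdef : ∀ x : ℝ, φ x = 1 - (1 + Real.exp ((K : ℝ) * (x - c))) ^ (-(1 : ℝ) / (K : ℝ))) :
    (∃ L : NNReal, LipschitzWith L φ) ∧ IsPDF φ ∧
      (∀ x, DifferentiableAt ℝ φ x) ∧ Continuous (deriv φ) ∧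
      ∀ x : ℝ, (1 / ((K : ℝ) + 1)) * deriv φ x =
        ∫ y in Set.Iic x, deriv φ y * (1 - φ y) ^ K * Real.exp (-(x - y)) := by
  have hK0 : (0 : ℝ) < K := by exact_mod_cast hK
  obtain rfl : φ = expWave K c := funext hφdef
  have hderiv : deriv (expWave K c) = expWaveDeriv K c :=
    funext fun x => (hasDerivAt_expWave hK0.ne' x).deriv
  have hlip := lipschitzWith_one_expWave (c := c) hK0
  refine ⟨⟨1, hlip⟩,
    ⟨monotone_expWave hK0.ne', fun x => hlip.continuous.continuousWithinAt,
      tendsto_expWave_atBot hK0, tendsto_expWave_atTop hK0⟩,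
    fun x => (hasDerivAt_expWave hK0.ne' x).differentiableAt,
    hderiv ▸ continuous_expWaveDeriv, fun x => ?_⟩
  have hintegrand : ∀ y, expWaveDeriv K c y * (1 - expWave K c y) ^ K * exp (-(x - y)) =
      exp (-x) * (exp y * expWaveDeriv K c y / (1 + exp (K * (y - c)))) := fun y => by
    rw [one_sub_expWave_pow (by omega), neg_sub, exp_sub, exp_neg]
    field_simp
  simp only [hderiv, hintegrand, integral_const_mul, integral_Iic_exp_mul_expWaveDeriv_div hK0]
  rw [exp_neg]
  field_simp
end
end

section
/- Assume μ = 1 and J(y) = 1 − e^{−y} for y ≥ 0, so J̄(x−y) = e^{−(x−y)}, and let v = ∫₀¹ η(ν) dν. If φ is a continuously differentiable Lipschitz proper probability distribution function on ℝ satisfying v φ′(x) = ∫_{−∞}^x φ′(y) η(φ(y)) e^{−(x−y)} dy for every x ∈ ℝ, then φ′ is differentiable on ℝ and φ satisfies the ordinary differential equation v (φ″(x) + φ′(x)) = φ′(x) η(φ(x)) for every x ∈ ℝ. -/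
/-! Writing `e^{-(x-y)} = e^{-x} e^{y}`, the right-hand side of the integral equation is
`u(x) = e^{-x} ∫_{-∞}^x f(y) e^y dy` with `f = φ' · (η ∘ φ)` bounded and continuous, so
`u' = f - u`. Since `v > 0` (as `η > 0` on `[0, 1)`), `φ' = u / v` is differentiable and
`v (φ'' + φ') = u' + u = f`. -/

open MeasureTheory Filter Topology

noncomputable section

open Real Set

lemma intervalIntegral_pos_of_strictAntiOn {η : ℝ → ℝ} {a b : ℝ} (hab : a < b)
    (hη : StrictAntiOn η (Icc a b)) (hηb : 0 ≤ η b) : 0 < ∫ t in a..b, η t := by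
  refine intervalIntegral.intervalIntegral_pos_of_pos_on ?_ (fun t ht => ?_) hab
  · exact (hη.antitoneOn.mono (uIcc_of_le hab.le).subset).intervalIntegrable
  · exact hηb.trans_lt (hη (Ioo_subset_Icc_self ht) (right_mem_Icc.2 hab.le) ht.2)

lemma IsPDF.mem_Icc {F : ℝ → ℝ} (hF : IsPDF F) (x : ℝ) : F x ∈ Icc (0 : ℝ) 1 :=
  ⟨le_of_tendsto hF.2.2.1 (eventually_atBot.2 ⟨x, fun _ hy => hF.1 hy⟩),
    ge_of_tendsto hF.2.2.2 (eventually_atTop.2 ⟨x, fun _ hy => hF.1 hy⟩)⟩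

lemma integrableOn_mul_exp_Iic {f : ℝ → ℝ} {C : ℝ} (hf : Continuous f) (hC : ∀ y, |f y| ≤ C)
    (x : ℝ) : IntegrableOn (fun y => f y * exp y) (Iic x) := by
  refine Integrable.mono' ((integrableOn_exp_Iic x).const_mul C)
    (hf.mul continuous_exp).aestronglyMeasurable.restrict (ae_of_all _ fun y => ?_)
  rw [Real.norm_eq_abs, abs_mul, abs_of_pos (exp_pos y)]
  exact mul_le_mul_of_nonneg_right (hC y) (exp_pos y).le

lemma hasDerivAt_integral_Iic {g : ℝ → ℝ} (hg : Continuous g)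
    (hint : ∀ x, IntegrableOn g (Iic x)) (x : ℝ) :
    HasDerivAt (fun x => ∫ y in Iic x, g y) (g x) x := by
  have hsplit : (fun z => ∫ y in Iic z, g y)
      = fun z => (∫ y in Iic 0, g y) + ∫ y in (0 : ℝ)..z, g y := by
    funext z
    rw [← intervalIntegral.integral_Iic_sub_Iic (hint 0) (hint z)]
    ring
  rw [hsplit]
  exact (intervalIntegral.integral_hasDerivAt_right (hg.intervalIntegrable 0 x)
    hg.aestronglyMeasurable.stronglyMeasurableAtFilter hg.continuousAt).const_add _

lemma hasDerivAt_integral_Iic_mul_exp {f : ℝ → ℝ} {C : ℝ} (hf : Continuous f)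
    (hC : ∀ y, |f y| ≤ C) (x : ℝ) :
    HasDerivAt (fun x => ∫ y in Iic x, f y * exp (-(x - y)))
      (f x - ∫ y in Iic x, f y * exp (-(x - y))) x := by
  have hfactor : ∀ x, ∫ y in Iic x, f y * exp (-(x - y))
      = exp (-x) * ∫ y in Iic x, f y * exp y := by
    intro x
    rw [← integral_const_mul]
    refine integral_congr_ae (ae_of_all _ fun y => ?_)
    dsimp only
    rw [show -(x - y) = -x + y by ring, exp_add]
    ring
  simp_rw [hfactor]
  have hF := hasDerivAt_integral_Iic (g := fun y => f y * exp y) (hf.mul continuous_exp)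
    (integrableOn_mul_exp_Iic hf hC) x
  have hE : HasDerivAt (fun x => exp (-x)) (-exp (-x)) x := by simpa using (hasDerivAt_neg x).exp
  refine (hE.mul hF).congr_deriv ?_
  have hexp : exp (-x) * exp x = 1 := by rw [← exp_add, neg_add_cancel, exp_zero]
  linear_combination f x * hexp

theorem traveling_wave_ode_exponential_general
    (η : ℝ → ℝ) (hη_cont : ContinuousOn η (Set.Icc 0 1))
    (hη_anti : StrictAntiOn η (Set.Icc 0 1)) (hη1 : η 1 = 0)
    (v : ℝ) (hv : v = ∫ ν in (0:ℝ)..1, η ν)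
    (φ : ℝ → ℝ) (hφ : IsPDF φ) (hlip : ∃ K : NNReal, LipschitzWith K φ)
    (hcont : Continuous (deriv φ))
    (heq : ∀ x : ℝ, v * deriv φ x
      = ∫ y in Set.Iic x, deriv φ y * η (φ y) * Real.exp (-(x - y))) :
    ∀ x : ℝ, DifferentiableAt ℝ (deriv φ) x ∧
      v * (deriv (deriv φ) x + deriv φ x) = deriv φ x * η (φ x) := by
  obtain ⟨K, hK⟩ := hlip
  have hv_pos : 0 < v := hv ▸ intervalIntegral_pos_of_strictAntiOn one_pos hη_anti hη1.ge
  obtain ⟨B, hB⟩ := isCompact_Icc.exists_bound_of_continuousOn hη_cont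
  set f := fun y => deriv φ y * η (φ y)
  have hf_cont : Continuous f := hcont.mul (hη_cont.comp_continuous hK.continuous hφ.mem_Icc)
  have hf_bound : ∀ y, |f y| ≤ K * B := fun y => by
    rw [abs_mul]
    exact mul_le_mul (norm_deriv_le_of_lipschitz hK) (hB _ (hφ.mem_Icc y)) (abs_nonneg _) K.2
  have hderiv_eq : deriv φ = fun x => (∫ y in Iic x, f y * exp (-(x - y))) / v := by
    funext x
    rw [← heq x, mul_div_cancel_left₀ _ hv_pos.ne']
  intro x
  have hφ'' : HasDerivAt (deriv φ) ((f x - v * deriv φ x) / v) x := by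
    have hu := (hasDerivAt_integral_Iic_mul_exp hf_cont hf_bound x).div_const v
    rwa [← hderiv_eq, ← heq x] at hu
  refine ⟨hφ''.differentiableAt, ?_⟩
  rw [hφ''.deriv]
  field_simp
  ring

/-- with `μ = 1` and exponential jump sizes `J(y) = 1 − e^{−y}`, any
continuously differentiable Lipschitz proper probability distribution function satisfying
the traveling-wave integral equation satisfies the ODE
`v (φ″(x) + φ′(x)) = φ′(x) η(φ(x))` for every `x`. -/
theorem traveling_wave_ode_exponential
    (η : ℝ → ℝ) (hη_cont : ContinuousOn η (Set.Icc 0 1))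
    (hη_anti : StrictAntiOn η (Set.Icc 0 1)) (hη0 : η 0 = 1) (hη1 : η 1 = 0)
    (v : ℝ) (hv : v = ∫ ν in (0:ℝ)..1, η ν)
    (φ : ℝ → ℝ) (hφ : IsPDF φ) (hlip : ∃ K : NNReal, LipschitzWith K φ)
    (hdiff : ∀ x, DifferentiableAt ℝ φ x) (hcont : Continuous (deriv φ))
    (heq : ∀ x : ℝ, v * deriv φ x
      = ∫ y in Set.Iic x, deriv φ y * η (φ y) * Real.exp (-(x - y))) :
    ∀ x : ℝ, DifferentiableAt ℝ (deriv φ) x ∧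
      v * (deriv (deriv φ) x + deriv φ x) = deriv φ x * η (φ x) :=
  traveling_wave_ode_exponential_general η hη_cont hη_anti hη1 v hv φ hφ hlip hcont heq
end
end
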